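/- If an inclusion t ≤ s between lattice terms fails in some distributive lattice, then it fails in the two-element lattice. -/

import Mathlib

inductive LatTerm (X : Type*) where
  | var : X → LatTerm X
  | top : LatTerm X
  | bot : LatTerm X
  | meet : LatTerm X → LatTerm X → LatTerm X
  | join : LatTerm X → LatTerm X → LatTerm X

def LatTerm.eval {X : Type*} {L : Type*} [Lattice L] [BoundedOrder L]
    (v : X → L) : LatTerm X → L
  | .var x => v x
  | .top => ⊤
  | .bot => ⊥
  | .meet t s => t.eval v ⊓ s.eval v
  | .join t s => t.eval v ⊔ s.eval v

/-! By the prime ideal theorem, if `a ≰ b` in a distributive lattice then some prime ideal `J`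
contains `b` but not `a`, and `x ↦ (x ∉ J)` is a bounded lattice homomorphism to `Bool`.
Evaluation of terms commutes with bounded lattice homomorphisms, so composing the failing
valuation with this homomorphism gives a failing valuation in `Bool`. -/

namespace LatTerm

theorem eval_comp_boundedLatticeHom {X L M : Type*} [Lattice L] [BoundedOrder L] [Lattice M]
    [BoundedOrder M] (f : BoundedLatticeHom L M) (v : X → L) (t : LatTerm X) :
    t.eval (f ∘ v) = f (t.eval v) := by
  induction t with
  | var x => rfl
  | top => exact (map_top f).symm
  | bot => exact (map_bot f).symm
  | meet t s iht ihs => rw [eval, eval, iht, ihs, map_inf]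
  | join t s iht ihs => rw [eval, eval, iht, ihs, map_sup]

end LatTerm

namespace Order.Ideal

variable {L : Type*} [Lattice L] {J : Ideal L}

theorem IsPrime.inf_mem_iff (hJ : J.IsPrime) {x y : L} : x ⊓ y ∈ J ↔ x ∈ J ∨ y ∈ J :=
  ⟨hJ.mem_or_mem, fun h => h.elim (J.lower inf_le_left) (J.lower inf_le_right)⟩

open Classical in
noncomputable def IsPrime.toBoundedLatticeHomBool [BoundedOrder L] (hJ : J.IsPrime) :
    BoundedLatticeHom L Bool where
  toFun x := decide (x ∉ J)
  map_sup' x y := by simp [sup_mem_iff]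
  map_inf' x y := by simp [hJ.inf_mem_iff, not_or]
  map_top' := by simp [isProper_iff_top_notMem.mp hJ.toIsProper]
  map_bot' := by simp [J.bot_mem]

theorem IsPrime.toBoundedLatticeHomBool_apply_eq_true [BoundedOrder L] (hJ : J.IsPrime)
    {x : L} : hJ.toBoundedLatticeHomBool x = true ↔ x ∉ J := by
  classical
  exact decide_eq_true_iff

end Order.Ideal

open Order in
theorem DistribLattice.exists_isPrime_mem_notMem_of_not_le {L : Type*} [DistribLattice L]
    {a b : L} (hab : ¬ a ≤ b) : ∃ J : Ideal L, J.IsPrime ∧ b ∈ J ∧ a ∉ J := by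
  have hdisj : Disjoint (PFilter.principal a : Set L) (Ideal.principal b : Set L) :=
    Set.disjoint_left.mpr fun _ hxa hxb => hab (le_trans hxa hxb)
  obtain ⟨J, hJ, hbJ, haJ⟩ := DistribLattice.prime_ideal_of_disjoint_filter_ideal hdisj
  exact ⟨J, hJ, hbJ Ideal.mem_principal_self,
    Set.disjoint_left.mp haJ (PFilter.mem_principal.mpr le_rfl)⟩

theorem DistribLattice.exists_boundedLatticeHom_bool_not_le {L : Type*} [DistribLattice L]
    [BoundedOrder L] {a b : L} (hab : ¬ a ≤ b) :
    ∃ f : BoundedLatticeHom L Bool, ¬ f a ≤ f b := by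
  obtain ⟨J, hJ, hbJ, haJ⟩ := exists_isPrime_mem_notMem_of_not_le hab
  refine ⟨hJ.toBoundedLatticeHomBool, ?_⟩
  simp [Bool.le_iff_imp, hJ.toBoundedLatticeHomBool_apply_eq_true, haJ, hbJ]

/-- If an inclusion `t ≤ s` fails in some distributive (bounded) lattice, then
it fails in the two-element lattice `Bool`. -/
theorem stmt1 {X : Type*} (t s : LatTerm X) (L : Type*)
    [DistribLattice L] [BoundedOrder L]
    (h : ∃ v : X → L, ¬ t.eval v ≤ s.eval v) :
    ∃ w : X → Bool, ¬ t.eval w ≤ s.eval w := by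
  obtain ⟨v, hv⟩ := h
  obtain ⟨f, hf⟩ := DistribLattice.exists_boundedLatticeHom_bool_not_le hv
  refine ⟨f ∘ v, ?_⟩
  rwa [LatTerm.eval_comp_boundedLatticeHom, LatTerm.eval_comp_boundedLatticeHom]
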